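/- Let n be a positive integer, μ ∈ ℂ^n a generic vector, and Δ a local derivation on the Witt algebra W_n = Der(ℂ[t_1^{±1},…,t_n^{±1}]) such that Δ(d_μ) = 0. Then for every α ∈ ℤ^n \ {0}, the element Δ(t^α d_μ) lies in the ℂ-linear span of the set {t^{kα} d_i : k ∈ ℤ, 1 ≤ i ≤ n}, i.e., Δ(t^α d_μ) is supported on the subgroup ℤα of ℤ^n. -/

import Mathlib

open scoped BigOperators

noncomputable section

/-- The Laurent polynomial algebra `ℂ[t₁^{±1},…,tₙ^{±1}]`, realized as the group
algebra of `ℤⁿ` over `ℂ`. -/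
abbrev LaurentAlg (n : ℕ) : Type := AddMonoidAlgebra ℂ (Fin n → ℤ)

/-- The Witt algebra `Wₙ = Der(ℂ[t₁^{±1},…,tₙ^{±1}])`. -/
abbrev WittAlg (n : ℕ) : Type := Derivation ℂ (LaurentAlg n) (LaurentAlg n)

/-- Pairing `(μ, β) ↦ ∑ μᵢ βᵢ`. -/
def dotp {n : ℕ} (μ : Fin n → ℂ) (β : Fin n → ℤ) : ℂ := ∑ i, μ i * (β i : ℂ)

lemma dotp_add {n : ℕ} (μ : Fin n → ℂ) (β γ : Fin n → ℤ) :
    dotp μ (β + γ) = dotp μ β + dotp μ γ := by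
  simp [dotp, mul_add, Finset.sum_add_distrib]

lemma dotp_zero {n : ℕ} (μ : Fin n → ℂ) : dotp μ 0 = 0 := by simp [dotp]

/-- A vector `μ ∈ ℂⁿ` is generic if `μ·α ≠ 0` for all nonzero `α ∈ ℤⁿ`. -/
def IsGeneric {n : ℕ} (μ : Fin n → ℂ) : Prop :=
  ∀ α : Fin n → ℤ, α ≠ 0 → dotp μ α ≠ 0

/-- Underlying linear map of `t^α d_μ`. -/
def wdAux {n : ℕ} (μ : Fin n → ℂ) (α : Fin n → ℤ) : LaurentAlg n →ₗ[ℂ] LaurentAlg n :=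
  (AddMonoidAlgebra.coeffLinearEquiv ℂ).symm.toLinearMap ∘ₗ
    Finsupp.lsum ℂ (fun β => dotp μ β • Finsupp.lsingle (α + β)) ∘ₗ
      (AddMonoidAlgebra.coeffLinearEquiv ℂ).toLinearMap

lemma wdAux_single {n : ℕ} (μ : Fin n → ℂ) (α β : Fin n → ℤ) (c : ℂ) :
    wdAux μ α (AddMonoidAlgebra.single β c) = dotp μ β • AddMonoidAlgebra.single (α + β) c := by
  classical
  rw [wdAux, AddMonoidAlgebra.single]
  show AddMonoidAlgebra.ofCoeff (Finsupp.lsum ℂ (fun β => dotp μ β • Finsupp.lsingle (α + β))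
    (Finsupp.single β c)) = _
  erw [Finsupp.lsum_single]
  rfl

/-- The derivation `t^α d_μ` of the Laurent polynomial algebra, sending
`t^β ↦ (μ·β) t^{α+β}`.  In particular `wd μ 0 = d_μ` and
`wd (Pi.single i 1) α = t^α dᵢ`. -/
def wd {n : ℕ} (μ : Fin n → ℂ) (α : Fin n → ℤ) : WittAlg n where
  toLinearMap := wdAux μ α
  map_one_eq_zero' := by
    rw [show (1 : LaurentAlg n) = AddMonoidAlgebra.single 0 1 from rfl, wdAux_single, dotp_zero,
      zero_smul]
  leibniz' := by
    intro a b
    show wdAux μ α (a * b) = a • wdAux μ α b + b • wdAux μ α a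
    induction a using AddMonoidAlgebra.induction_linear with
    | zero => simp
    | add f g hf hg =>
        rw [add_mul, map_add, hf, hg, map_add]
        simp only [smul_eq_mul, add_mul, mul_add]
        ring
    | single β c =>
      induction b using AddMonoidAlgebra.induction_linear with
      | zero => simp
      | add f g hf hg =>
          rw [mul_add, map_add, hf, hg, map_add]
          simp only [smul_eq_mul, add_mul, mul_add]
          ring
      | single γ d =>
          show wdAux μ α (AddMonoidAlgebra.single β c * AddMonoidAlgebra.single γ d) =
            AddMonoidAlgebra.single β c • wdAux μ α (AddMonoidAlgebra.single γ d)
            + AddMonoidAlgebra.single γ d • wdAux μ α (AddMonoidAlgebra.single β c)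
          rw [AddMonoidAlgebra.single_mul_single, wdAux_single, wdAux_single, wdAux_single,
            smul_eq_mul, smul_eq_mul, mul_smul_comm, mul_smul_comm,
            AddMonoidAlgebra.single_mul_single, AddMonoidAlgebra.single_mul_single,
            dotp_add, add_smul]
          rw [show β + (α + γ) = α + (β + γ) by abel, show γ + (α + β) = α + (β + γ) by abel,
            mul_comm d c, add_comm]

/-- A linear map `Δ` on a Lie algebra `L` is a local derivation if for each `x`
there is a Lie algebra derivation `Dₓ` with `Δ x = Dₓ x`. -/
def IsLocalDerivation {L : Type*} [LieRing L] [LieAlgebra ℂ L] (Δ : L →ₗ[ℂ] L) : Prop :=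
  ∀ x : L, ∃ D : LieDerivation ℂ L L, Δ x = D x

end

/-!
Write a derivation as `D = ∑_δ t^δ d_{D_δ}` with `D_δ ∈ ℂⁿ`. For a Lie derivation `D` of `Wₙ`,
comparing coefficients in `D ⁅d_μ, t^α d_μ⁆ = (μ·α) D (t^α d_μ)` gives
`D (t^α d_μ)_δ = T_δ (D (d_μ)_{δ-α})` with `T_δ v = v - (μ·(δ-α))⁻¹ (v·α) μ` an injective
transvection whenever `δ ∉ ℤα`. Applying the local derivation property at `d_μ + c t^α d_μ` and
using `Δ d_μ = 0`, the coefficients `x_k` of `Δ (t^α d_μ)` along a coset `δ₀ + ℤα ∌ 0` admit, for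
every `c`, a finitely supported solution of `p_k = c (x_k - T_k p_{k-1})`. Such a solution vanishes
below the support of `x` and, by injectivity of the `T_k`, from its top index `M` on; so
`x_M = T_M p_{M-1}`, where `p_{M-1}` is a continuous function of `c` vanishing at `c = 0`.
Letting `c → 0` gives `x_M = 0`.
-/

section Recursion

lemma Int.eq_zero_of_lt_of_support_finite {V : Type*} [Zero V] {p : ℤ → V}
    (hp : p.support.Finite) {K : ℤ} (h : ∀ k < K, p (k - 1) = 0 → p k = 0) :
    ∀ k < K, p k = 0 := by
  obtain ⟨L, hL⟩ := hp.bddBelow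
  have below : ∀ k < L, p k = 0 := fun k hk => by
    by_contra hne
    exact absurd (hL hne) (not_le.mpr hk)
  intro k hk
  rcases lt_or_ge k L with hkL | hLk
  · exact below k hkL
  induction k, hLk using Int.leInduction with
  | base => exact h L hk (below _ (by omega))
  | succ k _ ih => exact h (k + 1) hk (by simpa using ih (by omega))

lemma Int.eq_zero_of_ge_of_support_finite {V : Type*} [Zero V] {p : ℤ → V}
    (hp : p.support.Finite) {M : ℤ} (h : ∀ k > M, p k = 0 → p (k - 1) = 0) :
    ∀ k ≥ M, p k = 0 := by
  obtain ⟨U, hU⟩ := hp.bddAbove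
  have above : ∀ k > U, p k = 0 := fun k hk => by
    by_contra hne
    exact absurd (hU hne) (not_le.mpr hk)
  intro k hk
  rcases lt_or_ge U k with hUk | hkU
  · exact above k hUk
  induction k, hkU using Int.leInductionDown with
  | base => simpa using h (U + 1) (by omega) (above _ (by omega))
  | pred k _ ih => exact h k (by omega) (ih (by omega))

variable {𝕜 V : Type*} [NontriviallyNormedField 𝕜] [AddCommGroup V] [Module 𝕜 V]
  [TopologicalSpace V]

def IsFiniteSolution (x : ℤ → V) (B : ℤ → V →L[𝕜] V) (c : 𝕜) (p : ℤ → V) : Prop :=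
  p.support.Finite ∧ ∀ k, p k = c • (x k - B k (p (k - 1)))

variable {x : ℤ → V} {B : ℤ → V →L[𝕜] V}

lemma IsFiniteSolution.eq_zero_of_lt {c : 𝕜} {p : ℤ → V} (hp : IsFiniteSolution x B c p)
    {K : ℤ} (hK : ∀ k < K, x k = 0) : ∀ k < K, p k = 0 :=
  Int.eq_zero_of_lt_of_support_finite hp.1 fun k hk hp' => by
    rw [hp.2 k, hK k hk, hp', map_zero, sub_zero, smul_zero]

lemma IsFiniteSolution.eq_zero_of_ge {c : 𝕜} (hc : c ≠ 0) (hB : ∀ k, Function.Injective (B k))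
    {p : ℤ → V} (hp : IsFiniteSolution x B c p) {M : ℤ} (hM : ∀ k > M, x k = 0) :
    ∀ k ≥ M, p k = 0 :=
  Int.eq_zero_of_ge_of_support_finite hp.1 fun k hk hpk => by
    rw [hp.2 k, hM k hk, zero_sub, smul_neg, neg_eq_zero, smul_eq_zero_iff_right hc] at hpk
    exact (injective_iff_map_eq_zero (B k)).1 (hB k) _ hpk

variable [IsTopologicalAddGroup V] [ContinuousSMul 𝕜 V]

lemma exists_continuous_eq_of_isFiniteSolution {K : ℤ} (hK : ∀ k < K, x k = 0) :
    ∀ k ≥ K - 1, ∃ f : 𝕜 → V, Continuous f ∧ f 0 = 0 ∧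
      ∀ c p, IsFiniteSolution x B c p → p k = f c := by
  intro k hk
  induction k, hk using Int.leInduction with
  | base => exact ⟨0, continuous_const, rfl, fun c p hp => hp.eq_zero_of_lt hK _ (by omega)⟩
  | succ k _ ih =>
    obtain ⟨f, hf, hf0, hpf⟩ := ih
    refine ⟨fun c => c • (x (k + 1) - B (k + 1) (f c)), by fun_prop, by simp, fun c p hp => ?_⟩
    rw [hp.2, add_sub_cancel_right, hpf c p hp]

variable [T2Space V]

theorem eq_zero_of_forall_isFiniteSolution (hx : x.support.Finite)
    (hB : ∀ k, Function.Injective (B k)) (hsol : ∀ c ≠ 0, ∃ p, IsFiniteSolution x B c p) :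
    x = 0 := by
  by_contra hne
  obtain ⟨M, hM, hMmax⟩ := Int.exists_greatest_of_bdd hx.bddAbove
    (Function.support_nonempty_iff.2 hne)
  obtain ⟨K, hK⟩ := hx.bddBelow
  have below : ∀ k < K, x k = 0 := fun k hk => by_contra fun h => absurd (hK h) (not_le.mpr hk)
  have above : ∀ k > M, x k = 0 := fun k hk => by_contra fun h => absurd (hMmax k h) (not_le.mpr hk)
  obtain ⟨f, hf, hf0, hpf⟩ := exists_continuous_eq_of_isFiniteSolution (B := B) below (M - 1)
    (by linarith [hK hM])
  have hxM : ∀ c ≠ 0, B M (f c) = x M := fun c hc => by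
    obtain ⟨p, hp⟩ := hsol c hc
    have := hp.2 M
    rw [hp.eq_zero_of_ge hc hB above M le_rfl, hpf c p hp, eq_comm, smul_eq_zero_iff_right hc,
      sub_eq_zero] at this
    exact this.symm
  have hlim : Filter.Tendsto (fun c => B M (f c)) (nhdsWithin 0 {0}ᶜ) (nhds (x M)) :=
    tendsto_const_nhds.congr' <| eventually_nhdsWithin_of_forall fun c hc => (hxM c hc).symm
  have hlim0 : Filter.Tendsto (fun c => B M (f c)) (nhdsWithin 0 {0}ᶜ) (nhds 0) := by
    have := ((B M).continuous.comp hf).tendsto (0 : 𝕜)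
    rw [Function.comp_apply, hf0, map_zero] at this
    exact this.mono_left nhdsWithin_le_nhds
  exact hM (tendsto_nhds_unique hlim hlim0)

end Recursion

noncomputable section

open AddMonoidAlgebra

variable {n : ℕ}

lemma dotp_single (ν : Fin n → ℂ) (i : Fin n) : dotp ν (Pi.single i 1) = ν i := by
  simp [dotp, Pi.single_apply]

lemma dotp_sub (ν : Fin n → ℂ) (β γ : Fin n → ℤ) : dotp ν (β - γ) = dotp ν β - dotp ν γ := by
  simp [dotp, mul_sub, Finset.sum_sub_distrib]

def dotpLeft (α : Fin n → ℤ) : Module.Dual ℂ (Fin n → ℂ) where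
  toFun v := dotp v α
  map_add' u v := by simp [dotp, add_mul, Finset.sum_add_distrib]
  map_smul' c v := by simp [dotp, Finset.mul_sum, mul_assoc]

@[simp] lemma dotpLeft_apply (α : Fin n → ℤ) (v : Fin n → ℂ) : dotpLeft α v = dotp v α := rfl

lemma wd_single (ν : Fin n → ℂ) (β γ : Fin n → ℤ) (c : ℂ) :
    wd ν β (single γ c) = dotp ν γ • single (β + γ) c :=
  wdAux_single ν β γ c

lemma coeff_wd_apply (ν : Fin n → ℂ) (β : Fin n → ℤ) (f : LaurentAlg n) (γ : Fin n → ℤ) :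
    (wd ν β f).coeff γ = dotp ν (γ - β) * f.coeff (γ - β) := by
  induction f using AddMonoidAlgebra.induction_linear with
  | zero => simp
  | add f g hf hg => simp only [map_add, coeff_add, Finsupp.add_apply, hf, hg, mul_add]
  | single δ c =>
    rw [wd_single, coeff_smul, coeff_single, coeff_single, Finsupp.smul_apply,
      Finsupp.single_apply, Finsupp.single_apply, smul_eq_mul]
    by_cases h : δ = γ - β
    · simp [h]
    · rw [if_neg (by rintro rfl; simp at h), if_neg h]; simp

lemma wittAlg_ext {D D' : WittAlg n}
    (h : ∀ β, D (single β 1) = D' (single β 1)) : D = D' :=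
  Derivation.ext <| LinearMap.congr_fun
    (lhom_ext' fun β => LinearMap.ext_ring (h β) : (D : LaurentAlg n →ₗ[ℂ] LaurentAlg n) = D')

/-- `wittCoeff D δ` is the vector `v` such that `t^δ d_v` is the `δ`-component of `D`. -/
def wittCoeff : WittAlg n →ₗ[ℂ] (Fin n → ℤ) → Fin n → ℂ where
  toFun D δ i := (D (single (Pi.single i 1) 1)).coeff (δ + Pi.single i 1)
  map_add' D D' := by ext; simp
  map_smul' c D := by ext; simp

lemma wittCoeff_apply (D : WittAlg n) (δ : Fin n → ℤ) (i : Fin n) :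
    wittCoeff D δ i = (D (single (Pi.single i 1) 1)).coeff (δ + Pi.single i 1) := rfl

lemma wittCoeff_wd (ν : Fin n → ℂ) (β δ : Fin n → ℤ) :
    wittCoeff (wd ν β) δ = if δ = β then ν else 0 := by
  ext i
  rw [wittCoeff_apply, coeff_wd_apply, show δ + Pi.single i 1 - β = δ - β + Pi.single i 1 by abel,
    coeff_single, Finsupp.single_apply]
  by_cases h : δ = β
  · simp [h, dotp_single]
  · simp [h, sub_eq_zero]

def logDerivHom (D : WittAlg n) : (Fin n → ℤ) →+ LaurentAlg n :=
  AddMonoidHom.mk' (fun β => single (-β) 1 * D (single β 1)) fun β γ => by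
    rw [← one_mul (1 : ℂ), ← single_mul_single, Derivation.leibniz, smul_eq_mul, smul_eq_mul,
      mul_add, ← mul_assoc, ← mul_assoc, single_mul_single, single_mul_single, neg_add,
      neg_add_cancel_right, add_comm (-β), neg_add_cancel_right, one_mul, one_mul, add_comm]

lemma coeff_apply_single (D : WittAlg n) (β γ : Fin n → ℤ) :
    (D (single β 1)).coeff γ = dotp (wittCoeff D (γ - β)) β := by
  have hD : D (single β 1) = single β 1 * logDerivHom D β := by
    rw [logDerivHom, AddMonoidHom.mk'_apply, ← mul_assoc, single_mul_single, add_neg_cancel,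
      one_mul, ← one_def, one_mul]
  have hβ : logDerivHom D β = ∑ j, β j • logDerivHom D (Pi.single j 1) := by
    conv_lhs => rw [pi_eq_sum_univ' β]
    simp only [map_sum, map_zsmul]
  rw [hD, coeff_single_mul_apply, one_mul, hβ, coeff_sum, Finset.sum_apply', dotp]
  refine Finset.sum_congr rfl fun j _ => ?_
  rw [logDerivHom, AddMonoidHom.mk'_apply, ← Int.cast_smul_eq_zsmul ℂ, coeff_smul,
    Finsupp.smul_apply, coeff_single_mul_apply, one_mul, wittCoeff_apply, smul_eq_mul, mul_comm,
    show - -Pi.single j 1 + (-β + γ) = γ - β + Pi.single j 1 by abel]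

lemma wittCoeff_injective : Function.Injective (wittCoeff (n := n)) := fun D D' h =>
  wittAlg_ext fun β => by
    ext γ
    rw [coeff_apply_single, coeff_apply_single, h]

lemma finite_support_wittCoeff (D : WittAlg n) : (Function.support (wittCoeff D)).Finite := by
  refine (Set.finite_iUnion fun i =>
    ((D (single (Pi.single i 1) 1)).coeff.support.finite_toSet.image (· - Pi.single i 1))).subset
    fun δ hδ => ?_
  obtain ⟨i, hi⟩ := Function.ne_iff.mp hδ
  exact Set.mem_iUnion.2
    ⟨i, δ + Pi.single i 1, Finsupp.mem_support_iff.2 hi, add_sub_cancel_right _ _⟩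

lemma sum_wd_wittCoeff (D : WittAlg n) :
    ∑ δ ∈ (finite_support_wittCoeff D).toFinset, wd (wittCoeff D δ) δ = D := by
  refine wittCoeff_injective (funext fun δ => ?_)
  simp only [map_sum, Finset.sum_apply, wittCoeff_wd, Finset.sum_ite_eq, Set.Finite.mem_toFinset,
    Function.mem_support, ite_not]
  split_ifs with h <;> simp [h]

lemma wd_eq_sum_single (ν : Fin n → ℂ) (β : Fin n → ℤ) :
    wd ν β = ∑ i, ν i • wd (Pi.single i 1) β := by
  refine wittCoeff_injective (funext fun δ => ?_)
  simp only [map_sum, map_smul, Finset.sum_apply, Pi.smul_apply, wittCoeff_wd]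
  split_ifs
  · exact pi_eq_sum_univ' ν
  · simp

lemma wittCoeff_lie_wd_zero (μ : Fin n → ℂ) (W : WittAlg n) (δ : Fin n → ℤ) :
    wittCoeff ⁅wd μ 0, W⁆ δ = dotp μ δ • wittCoeff W δ := by
  ext i
  rw [wittCoeff_apply, Derivation.commutator_apply, wd_single, zero_add, dotp_single,
    Derivation.map_smul, coeff_sub, Finsupp.sub_apply, coeff_smul, Finsupp.smul_apply,
    coeff_wd_apply, sub_zero, dotp_add, dotp_single, ← wittCoeff_apply, Pi.smul_apply, smul_eq_mul,
    smul_eq_mul]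
  ring

lemma wittCoeff_lie_wd (P : WittAlg n) (μ : Fin n → ℂ) (α δ : Fin n → ℤ) :
    wittCoeff ⁅P, wd μ α⁆ δ =
      dotp (wittCoeff P (δ - α)) α • μ - dotp μ (δ - α) • wittCoeff P (δ - α) := by
  ext i
  rw [wittCoeff_apply, Derivation.commutator_apply, wd_single, dotp_single, Derivation.map_smul,
    coeff_sub, Finsupp.sub_apply, coeff_smul, Finsupp.smul_apply, coeff_apply_single,
    coeff_wd_apply, coeff_apply_single,
    show δ + Pi.single i 1 - (α + Pi.single i 1) = δ - α by abel,
    show δ + Pi.single i 1 - α - Pi.single i 1 = δ - α by abel,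
    show δ + Pi.single i 1 - α = δ - α + Pi.single i 1 by abel, dotp_add, dotp_add, dotp_single,
    dotp_single]
  simp only [Pi.sub_apply, Pi.smul_apply, smul_eq_mul]
  ring

lemma lie_wd_zero_wd (μ : Fin n → ℂ) (α : Fin n → ℤ) :
    ⁅wd μ 0, wd μ α⁆ = dotp μ α • wd μ α := by
  refine wittCoeff_injective (funext fun δ => ?_)
  rw [wittCoeff_lie_wd_zero, map_smul, Pi.smul_apply, wittCoeff_wd]
  split_ifs with h
  · rw [h]
  · simp

lemma LinearMap.transvection_injective {R V : Type*} [Ring R] [NoZeroDivisors R] [AddCommGroup V]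
    [Module R V] {f : Module.Dual R V} {v : V} (h : f v ≠ -1) :
    Function.Injective (transvection f v) := by
  refine (injective_iff_map_eq_zero _).2 fun x hx => ?_
  rw [transvection.apply] at hx
  have hfx : f x * (1 + f v) = 0 := by
    simpa [mul_add, smul_eq_mul] using congrArg f hx
  have : f x = 0 := (mul_eq_zero.1 hfx).resolve_right fun h' => h (eq_neg_of_add_eq_zero_right h')
  simpa [this] using hx

/-- Comparing coefficients in `D ⁅d_μ, t^α d_μ⁆ = ⁅d_μ, D (t^α d_μ)⁆ + ⁅D d_μ, t^α d_μ⁆`. -/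
lemma LieDerivation.wittCoeff_apply_wd (D : LieDerivation ℂ (WittAlg n) (WittAlg n))
    (μ : Fin n → ℂ) {α δ : Fin n → ℤ} (hδ : dotp μ (δ - α) ≠ 0) :
    wittCoeff (D (wd μ α)) δ =
      LinearMap.transvection (dotpLeft α) (-(dotp μ (δ - α))⁻¹ • μ)
        (wittCoeff (D (wd μ 0)) (δ - α)) := by
  have h := congrArg (fun W => wittCoeff W δ) (D.apply_lie_eq_add (wd μ 0) (wd μ α))
  simp only [lie_wd_zero_wd, map_smul, map_add, Pi.add_apply, Pi.smul_apply, wittCoeff_lie_wd_zero,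
    wittCoeff_lie_wd] at h
  refine smul_right_injective _ hδ ?_
  have hinv : ∀ a : ℂ, dotp μ (δ - α) * (a * -(dotp μ (δ - α))⁻¹) = -a := fun a => by field_simp
  simp only [LinearMap.transvection.apply, dotpLeft_apply, smul_add, smul_smul, hinv]
  rw [dotp_sub] at h ⊢
  linear_combination (norm := module) -h

lemma finite_support_wittCoeff_line (D : WittAlg n) (δ₀ : Fin n → ℤ) {α : Fin n → ℤ}
    (hα : α ≠ 0) : (Function.support fun k : ℤ => wittCoeff D (δ₀ + k • α)).Finite :=
  (finite_support_wittCoeff D).preimage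
    ((add_right_injective δ₀).comp (smul_left_injective ℤ hα)).injOn

/-- By `LieDerivation.wittCoeff_apply_wd`, this map sends the coefficient of `D d_μ` at
`δ₀ + (k - 1) α` to that of `D (t^α d_μ)` at `δ₀ + k α`. -/
def lineTransvection (μ : Fin n → ℂ) (α δ₀ : Fin n → ℤ) (k : ℤ) :
    (Fin n → ℂ) →L[ℂ] Fin n → ℂ :=
  (LinearMap.transvection (dotpLeft α) (-(dotp μ (δ₀ + (k - 1) • α))⁻¹ • μ)).toContinuousLinearMap

lemma lineTransvection_injective {μ : Fin n → ℂ} {α δ₀ : Fin n → ℤ}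
    (hline : ∀ k : ℤ, dotp μ (δ₀ + k • α) ≠ 0) (k : ℤ) :
    Function.Injective (lineTransvection μ α δ₀ k) := by
  rw [lineTransvection, LinearMap.coe_toContinuousLinearMap']
  refine LinearMap.transvection_injective ?_
  rw [map_smul, dotpLeft_apply, smul_eq_mul, neg_mul, Ne, neg_inj, inv_mul_eq_one₀ (hline _), ← Ne,
    ← sub_ne_zero, ← dotp_sub, sub_eq_add_neg, add_assoc, ← neg_one_zsmul, ← add_zsmul]
  exact hline _

lemma isFiniteSolution_wittCoeff {μ : Fin n → ℂ} {α δ₀ : Fin n → ℤ} (hα : α ≠ 0)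
    (hline : ∀ k : ℤ, dotp μ (δ₀ + k • α) ≠ 0) {X : WittAlg n}
    (D : LieDerivation ℂ (WittAlg n) (WittAlg n)) {c : ℂ}
    (hD : c • X = D (wd μ 0) + c • D (wd μ α)) :
    IsFiniteSolution (fun k => wittCoeff X (δ₀ + k • α)) (lineTransvection μ α δ₀) c
      (fun k => wittCoeff (D (wd μ 0)) (δ₀ + k • α)) := by
  refine ⟨finite_support_wittCoeff_line _ _ hα, fun k => ?_⟩
  have hk : δ₀ + k • α - α = δ₀ + (k - 1) • α := by rw [sub_smul, one_smul, add_sub_assoc]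
  have h := congrArg (fun W => wittCoeff W (δ₀ + k • α)) hD
  simp only [map_add, map_smul, Pi.add_apply, Pi.smul_apply] at h
  rw [D.wittCoeff_apply_wd μ (α := α) (δ := δ₀ + k • α) (by rw [hk]; exact hline _), hk] at h
  rw [smul_sub, h]
  exact (add_sub_cancel_right _ _).symm

theorem wittCoeff_eq_zero_of_notMem_zmultiples {μ : Fin n → ℂ} (hμ : IsGeneric μ)
    {Δ : WittAlg n →ₗ[ℂ] WittAlg n} (hΔ : IsLocalDerivation Δ) (h0 : Δ (wd μ 0) = 0)
    {α δ₀ : Fin n → ℤ} (hα : α ≠ 0) (hδ₀ : δ₀ ∉ AddSubgroup.zmultiples α) :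
    wittCoeff (Δ (wd μ α)) δ₀ = 0 := by
  have hline : ∀ k : ℤ, dotp μ (δ₀ + k • α) ≠ 0 := fun k => hμ _ fun h =>
    hδ₀ ⟨-k, by dsimp only; rw [neg_smul, eq_neg_of_add_eq_zero_left h]⟩
  have hsol : ∀ c ≠ 0, ∃ p, IsFiniteSolution (fun k => wittCoeff (Δ (wd μ α)) (δ₀ + k • α))
      (lineTransvection μ α δ₀) c p := fun c _ => by
    obtain ⟨D, hD⟩ := hΔ (wd μ 0 + c • wd μ α)
    refine ⟨_, isFiniteSolution_wittCoeff hα hline D ?_⟩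
    rw [← map_smul, ← zero_add (Δ _), ← h0, ← map_add, hD, map_add, map_smul]
  simpa using congrFun (eq_zero_of_forall_isFiniteSolution (finite_support_wittCoeff_line _ _ hα)
    (lineTransvection_injective hline) hsol) 0

end

theorem local_derivation_supported_on_line_general (n : ℕ)
    (μ : Fin n → ℂ) (hμ : IsGeneric μ)
    (Δ : WittAlg n →ₗ[ℂ] WittAlg n) (hΔ : IsLocalDerivation Δ)
    (h0 : Δ (wd μ 0) = 0) :
    ∀ α : Fin n → ℤ, α ≠ 0 →
      Δ (wd μ α) ∈ Submodule.span ℂ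
        {x : WittAlg n | ∃ (k : ℤ) (i : Fin n), x = wd (Pi.single i 1) (k • α)} := by
  intro α hα
  rw [← sum_wd_wittCoeff (Δ (wd μ α))]
  refine Submodule.sum_mem _ fun δ hδ => ?_
  obtain ⟨k, rfl⟩ : δ ∈ AddSubgroup.zmultiples α := by
    by_contra h
    exact (Set.Finite.mem_toFinset _).1 hδ (wittCoeff_eq_zero_of_notMem_zmultiples hμ hΔ h0 hα h)
  rw [wd_eq_sum_single]
  exact Submodule.sum_mem _ fun i _ => Submodule.smul_mem _ _ (Submodule.subset_span ⟨k, i, rfl⟩)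

/-- If `Δ` is a local derivation on `Wₙ` with `Δ(d_μ) = 0` (`μ` generic),
then for every `α ∈ ℤⁿ \ {0}`, `Δ(t^α d_μ)` lies in the span of `{t^{kα} dᵢ : k ∈ ℤ, i}`. -/
theorem local_derivation_supported_on_line (n : ℕ) (hn : 0 < n)
    (μ : Fin n → ℂ) (hμ : IsGeneric μ)
    (Δ : WittAlg n →ₗ[ℂ] WittAlg n) (hΔ : IsLocalDerivation Δ)
    (h0 : Δ (wd μ 0) = 0) :
    ∀ α : Fin n → ℤ, α ≠ 0 →
      Δ (wd μ α) ∈ Submodule.span ℂ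
        {x : WittAlg n | ∃ (k : ℤ) (i : Fin n), x = wd (Pi.single i 1) (k • α)} :=
  local_derivation_supported_on_line_general n μ hμ Δ hΔ h0
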